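/- arXiv:2508.11660 — 4 statements merged into one kernel-verified Lean document; each statement's English description precedes it below -/
import Mathlib

section
/- If n = p²q for distinct primes p, q and σ(n) = 2(n+1), then p = 2 and q = 5 (so n = 20). -/
/-- Sum of positive divisors. -/
def sigma (n : ℕ) : ℕ := ∑ d ∈ n.divisors, d

/-- σ⁺(n) = ∏_{p ∣ n} (σ(p^{v_p(n)}) + 1). -/
def sigmaPlus (n : ℕ) : ℕ := ∏ p ∈ n.primeFactors, (sigma (p ^ n.factorization p) + 1)

/-- φ⁺(n) = ∏_{p ∣ n} (φ(p^{v_p(n)}) + 1). -/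
def phiPlus (n : ℕ) : ℕ := ∏ p ∈ n.primeFactors, (Nat.totient (p ^ n.factorization p) + 1)

/-!
By multiplicativity σ(p²q) = (1 + p + p²)(1 + q), so the hypothesis becomes
q(p² - p - 1) = p² + p - 1. Since q ≥ 2 this forces p² - 3p - 1 ≤ 0, i.e. p ≤ 3;
p = 3 gives 5q = 11, which is impossible, and p = 2 gives q = 5.
-/

lemma sigma_eq_sigma_one_apply (n : ℕ) : sigma n = ArithmeticFunction.sigma 1 n :=
  (ArithmeticFunction.sigma_one_apply n).symm

lemma sigma_mul_of_coprime {m n : ℕ} (h : m.Coprime n) : sigma (m * n) = sigma m * sigma n := by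
  simp only [sigma_eq_sigma_one_apply, ArithmeticFunction.isMultiplicative_sigma.map_mul_of_coprime h]

lemma sigma_prime_pow {p : ℕ} (hp : p.Prime) (k : ℕ) :
    sigma (p ^ k) = ∑ i ∈ Finset.range (k + 1), p ^ i := by
  rw [sigma_eq_sigma_one_apply, ArithmeticFunction.sigma_one_apply_prime_pow hp]

lemma sigma_prime_sq_mul_prime {p q : ℕ} (hp : p.Prime) (hq : q.Prime) (hpq : p ≠ q) :
    sigma (p ^ 2 * q) = (1 + p + p ^ 2) * (1 + q) := by
  have hcop : (p ^ 2).Coprime q := ((Nat.coprime_primes hp hq).mpr hpq).pow_left 2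
  rw [sigma_mul_of_coprime hcop, sigma_prime_pow hp, ← pow_one q, sigma_prime_pow hq]
  simp [Finset.sum_range_succ]

lemma eq_two_and_eq_five_of_mul_eq {p q : ℕ} (hq : 2 ≤ q)
    (h : (1 + p + p ^ 2) * (1 + q) = 2 * (p ^ 2 * q + 1)) : p = 2 ∧ q = 5 := by
  have hp : p ≤ 3 := by
    by_contra! hp
    nlinarith [Nat.mul_le_mul_right (p ^ 2) hq, Nat.mul_le_mul_right q hp]
  interval_cases p <;> omega

theorem stmt_0 (p q n : ℕ) (hp : p.Prime) (hq : q.Prime) (hpq : p ≠ q)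
    (hn : n = p ^ 2 * q) (h : sigma n = 2 * (n + 1)) : p = 2 ∧ q = 5 := by
  subst hn
  rw [sigma_prime_sq_mul_prime hp hq hpq] at h
  exact eq_two_and_eq_five_of_mul_eq hq.two_le h
end

section
/- If n = pq for distinct primes p and q, then n+1 does not divide σ⁺(n), where σ⁺(pq) = (p+2)(q+2). -/
/-!
Since `(p + 2) * (q + 2) = pq + 2(p + q) + 4` lies strictly between `pq + 1` and `3(pq + 1)`,
divisibility by `pq + 1` would force `(p + 2) * (q + 2) = 2(pq + 1)`, i.e. `pq = 2(p + q + 1)`.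
Then `pq` is even, so one of the primes is `2`, and the equation fails.
-/

lemma sigma_prime {p : ℕ} (hp : p.Prime) : sigma p = p + 1 := by
  rw [sigma, hp.divisors, Finset.sum_pair hp.one_lt.ne, add_comm]

lemma factorization_prime_mul_prime_left {p q : ℕ} (hp : p.Prime) (hq : q.Prime) (hpq : p ≠ q) :
    (p * q).factorization p = 1 := by
  simp [Nat.factorization_mul hp.ne_zero hq.ne_zero, hp.factorization, hq.factorization,
    Ne.symm hpq]

lemma sigmaPlus_prime_mul_prime {p q : ℕ} (hp : p.Prime) (hq : q.Prime) (hpq : p ≠ q) :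
    sigmaPlus (p * q) = (p + 2) * (q + 2) := by
  have hfactors : (p * q).primeFactors = {p, q} := by
    rw [Nat.primeFactors_mul hp.ne_zero hq.ne_zero, hp.primeFactors, hq.primeFactors]
    rfl
  rw [sigmaPlus, hfactors, Finset.prod_pair hpq, factorization_prime_mul_prime_left hp hq hpq,
    mul_comm p q, factorization_prime_mul_prime_left hq hp hpq.symm, pow_one, pow_one,
    sigma_prime hp, sigma_prime hq]

lemma eq_two_mul_of_dvd_of_lt_of_lt {n m : ℕ} (hdvd : n ∣ m) (hlt : n < m) (hlt' : m < 3 * n) :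
    m = 2 * n := by
  obtain ⟨k, rfl⟩ := hdvd
  have hk : 1 < k := by nlinarith
  have hk' : k < 3 := by nlinarith
  obtain rfl : k = 2 := by omega
  ring

lemma add_two_mul_add_two_lt_three_mul {p q : ℕ} (hp : 2 ≤ p) (hq : 2 ≤ q) (hpq : p ≠ q) :
    (p + 2) * (q + 2) < 3 * (p * q + 1) := by
  rcases Nat.lt_or_gt_of_ne hpq with h | h <;> nlinarith

lemma add_two_mul_add_two_ne_two_mul {p q : ℕ} (hp : p.Prime) (hq : q.Prime) :
    (p + 2) * (q + 2) ≠ 2 * (p * q + 1) := by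
  intro h
  have heven : 2 ∣ p * q := ⟨p + q + 1, by linarith⟩
  rcases (Nat.Prime.dvd_mul Nat.prime_two).mp heven with h2 | h2
  · obtain rfl := (Nat.prime_dvd_prime_iff_eq Nat.prime_two hp).mp h2
    omega
  · obtain rfl := (Nat.prime_dvd_prime_iff_eq Nat.prime_two hq).mp h2
    omega

theorem stmt_3 (p q n : ℕ) (hp : p.Prime) (hq : q.Prime) (hpq : p ≠ q) (hn : n = p * q) :
    ¬ (n + 1) ∣ sigmaPlus n := by
  subst hn
  rw [sigmaPlus_prime_mul_prime hp hq hpq]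
  intro hdvd
  have hlt : p * q + 1 < (p + 2) * (q + 2) := by nlinarith
  exact add_two_mul_add_two_ne_two_mul hp hq <| eq_two_mul_of_dvd_of_lt_of_lt hdvd hlt
    (add_two_mul_add_two_lt_three_mul hp.two_le hq.two_le hpq)
end

section
/- There are no primes p, q with σ⁺(p²q) = 2(p²q + 1), where for distinct primes p, q, σ⁺(p²q) = (2 + p + p²)(2 + q). -/
lemma sigmaPlus_eq_factorization_prod (n : ℕ) :
    sigmaPlus n = n.factorization.prod fun p k => sigma (p ^ k) + 1 := by
  rw [sigmaPlus, Finsupp.prod, Nat.support_factorization]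

lemma sigmaPlus_mul {m n : ℕ} (hmn : m.Coprime n) :
    sigmaPlus (m * n) = sigmaPlus m * sigmaPlus n := by
  simp only [sigmaPlus_eq_factorization_prod, Nat.factorization_mul_of_coprime hmn]
  apply Finsupp.prod_add_index_of_disjoint
  simpa only [Nat.support_factorization] using hmn.disjoint_primeFactors

lemma sigmaPlus_prime_pow {p k : ℕ} (hp : p.Prime) (hk : k ≠ 0) :
    sigmaPlus (p ^ k) = sigma (p ^ k) + 1 := by
  rw [sigmaPlus, Nat.primeFactors_prime_pow hk hp, Finset.prod_singleton,
    hp.factorization_pow, Finsupp.single_eq_same]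

lemma sigmaPlus_prime {p : ℕ} (hp : p.Prime) : sigmaPlus p = 2 + p := by
  have h := sigmaPlus_prime_pow hp one_ne_zero
  rw [pow_one] at h
  rw [h, sigma, hp.sum_divisors]
  ring

lemma sigmaPlus_prime_sq_mul {p q : ℕ} (hp : p.Prime) (hq : q.Prime) (hpq : p ≠ q) :
    sigmaPlus (p ^ 2 * q) = (2 + p + p ^ 2) * (2 + q) := by
  have hcop : (p ^ 2).Coprime q := ((Nat.coprime_primes hp hq).mpr hpq).pow_left 2
  rw [sigmaPlus_mul hcop, sigmaPlus_prime_pow hp two_ne_zero, sigma_prime_pow hp,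
    sigmaPlus_prime hq]
  simp only [Finset.sum_range_succ, Finset.sum_range_zero]
  ring

lemma sigmaPlus_prime_cube {p : ℕ} (hp : p.Prime) :
    sigmaPlus (p ^ 3) = 2 + p + p ^ 2 + p ^ 3 := by
  rw [sigmaPlus_prime_pow hp three_ne_zero, sigma_prime_pow hp]
  simp only [Finset.sum_range_succ, Finset.sum_range_zero]
  ring

lemma two_add_add_sq_mul_ne {p q : ℤ} (hp : 2 ≤ p) :
    (2 + p + p ^ 2) * (2 + q) ≠ 2 * (p ^ 2 * q + 1) := by
  intro h
  have key : (p + 1) * (q * (p - 2) - 2 * p) = 2 := by linear_combination -h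
  have := Int.le_of_dvd two_pos ⟨_, key.symm⟩
  omega

lemma two_add_add_sq_add_cube_ne {p : ℕ} (hp : 2 ≤ p) :
    2 + p + p ^ 2 + p ^ 3 ≠ 2 * (p ^ 3 + 1) := by
  intro h
  nlinarith [Nat.mul_le_mul_left (p ^ 2) hp, Nat.mul_le_mul_left p hp]

lemma sigmaPlus_prime_sq_mul_ne {p q : ℕ} (hp : p.Prime) (hq : q.Prime) :
    sigmaPlus (p ^ 2 * q) ≠ 2 * (p ^ 2 * q + 1) := by
  obtain rfl | hpq := eq_or_ne p q
  · rw [← pow_succ, sigmaPlus_prime_cube hp]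
    exact two_add_add_sq_add_cube_ne hp.two_le
  · rw [sigmaPlus_prime_sq_mul hp hq hpq]
    exact_mod_cast two_add_add_sq_mul_ne (p := p) (q := q) (by exact_mod_cast hp.two_le)

theorem stmt_4 : ¬ ∃ p q : ℕ, p.Prime ∧ q.Prime ∧ sigmaPlus (p ^ 2 * q) = 2 * (p ^ 2 * q + 1) := by
  rintro ⟨p, q, hp, hq, h⟩
  exact sigmaPlus_prime_sq_mul_ne hp hq h
end

section
/- If n = p^r is a prime power with r ≥ 1 and φ⁺(n) divides n - 1, then p = 2 and r = 2, i.e., n = 4. -/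
open scoped Nat

theorem phiPlus_prime_pow {p r : ℕ} (hp : p.Prime) (hr : r ≠ 0) :
    phiPlus (p ^ r) = φ (p ^ r) + 1 := by
  rw [phiPlus, Nat.primeFactors_prime_pow hr hp, Finset.prod_singleton, hp.factorization_pow,
    Finsupp.single_eq_same]

theorem totient_prime_pow_add_pow_pred {p r : ℕ} (hp : p.Prime) (hr : 0 < r) :
    φ (p ^ r) + p ^ (r - 1) = p ^ r := by
  rw [Nat.totient_prime_pow hp hr, ← mul_add_one, Nat.sub_add_cancel hp.one_le, ← pow_succ,
    Nat.sub_add_cancel hr]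

theorem prime_pow_le_two_mul_totient {p r : ℕ} (hp : p.Prime) (hr : 0 < r) :
    p ^ r ≤ 2 * φ (p ^ r) := by
  have hsum := totient_prime_pow_add_pow_pred hp hr
  have hle : p ^ (r - 1) ≤ φ (p ^ r) := by
    rw [Nat.totient_prime_pow hp hr]
    exact Nat.le_mul_of_pos_right _ (Nat.sub_pos_of_lt hp.one_lt)
  omega

theorem stmt_12 (p r : ℕ) (hp : p.Prime) (hr : 1 ≤ r)
    (h : phiPlus (p ^ r) ∣ (p ^ r - 1)) : p = 2 ∧ r = 2 := by
  rw [phiPlus_prime_pow hp (by omega)] at h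
  have hpos : p ^ r - 1 ≠ 0 := Nat.sub_ne_zero_of_lt (Nat.one_lt_pow (by omega) hp.one_lt)
  have heq : p ^ r - 1 = φ (p ^ r) + 1 :=
    Nat.eq_of_dvd_of_lt_two_mul hpos h (by have := prime_pow_le_two_mul_totient hp hr; omega)
  have htwo : p ^ (r - 1) = 2 := by
    have := totient_prime_pow_add_pow_pred hp hr
    omega
  obtain ⟨rfl, hr1⟩ := Nat.prime_two.pow_eq_iff.1 htwo
  exact ⟨rfl, by omega⟩
end
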